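/- Let k be a field and consider the formal power series ring R = k[[w₁,…,w_{n-1}, t]] with the derivation D = ∂/∂t. Suppose g ∈ R satisfies D(g) = h·g for some h ∈ R. Then there exists a unit u ∈ R (with constant term 1 when evaluated appropriately, assuming k has characteristic 0) such that g = u · g₀, where g₀ ∈ k[[w₁,…,w_{n-1}]] is obtained from g by setting t = 0. -/

import Mathlib

/-!
With `u = exp (∫₀ᵗ h)`, formed by substituting the formal antiderivative of `h` into `exp`, one has
`u' = h u` and `u(0) = 1`. Then `(u⁻¹ g)' = u⁻¹ (g' - h g) = 0`, so `u⁻¹ g` is the constant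
`g(0)`.
-/

namespace PowerSeries

section RatAlgebra

variable {S : Type*} [CommRing S] [Algebra ℚ S]

/-- The formal antiderivative with constant term `0` (the `n = 0` coefficient is `0⁻¹ • _ = 0`). -/
noncomputable def integral (f : S⟦X⟧) : S⟦X⟧ := mk fun n ↦ (n : ℚ)⁻¹ • coeff (n - 1) f

theorem constantCoeff_integral (f : S⟦X⟧) : constantCoeff (integral f) = 0 := by
  simp [integral]

theorem derivative_integral (f : S⟦X⟧) : d⁄dX S (integral f) = f := by
  ext n
  rw [coeff_derivative, integral, coeff_mk, Nat.add_sub_cancel, ← Nat.cast_succ, mul_comm,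
    ← nsmul_eq_mul, ← Nat.cast_smul_eq_nsmul ℚ, smul_smul, mul_inv_cancel₀ (by positivity), one_smul]

theorem constantCoeff_exp_subst {H : S⟦X⟧} (hH : constantCoeff H = 0) :
    constantCoeff ((exp S).subst H) = 1 := by
  have hsub_one := constantCoeff_subst_eq_zero hH (exp S - 1) (by simp)
  rwa [subst_sub (HasSubst.of_constantCoeff_zero' hH), ← map_one (C (R := S)), subst_C, map_sub,
    sub_eq_zero] at hsub_one

theorem derivative_exp_subst {H : S⟦X⟧} (hH : constantCoeff H = 0) :
    d⁄dX S ((exp S).subst H) = d⁄dX S H * (exp S).subst H := by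
  rw [derivative_subst (HasSubst.of_constantCoeff_zero' hH), derivative_exp, mul_comm]

theorem exists_unit_constantCoeff_eq_one_derivative_eq_mul (h : S⟦X⟧) :
    ∃ u : S⟦X⟧ˣ, constantCoeff (u : S⟦X⟧) = 1 ∧ d⁄dX S u = h * u := by
  have hH := constantCoeff_integral h
  obtain ⟨u, hu⟩ := isUnit_iff_constantCoeff.mpr ((constantCoeff_exp_subst hH).symm ▸ isUnit_one)
  refine ⟨u, hu ▸ constantCoeff_exp_subst hH, ?_⟩
  rw [hu, derivative_exp_subst hH, derivative_integral]

end RatAlgebra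

theorem eq_mul_C_constantCoeff_of_derivative_eq_mul {S : Type*} [CommRing S] [IsAddTorsionFree S]
    {u : S⟦X⟧ˣ} {g h : S⟦X⟧} (hu₀ : constantCoeff (u : S⟦X⟧) = 1) (hu : d⁄dX S u = h * u)
    (hg : d⁄dX S g = h * g) : g = u * C (constantCoeff g) := by
  suffices ↑u⁻¹ * g = C (constantCoeff g) by rw [← this, Units.mul_inv_cancel_left]
  refine derivative.ext ?_ ?_
  · rw [derivative_C, Derivation.leibniz, derivative_inv, hu, hg, smul_eq_mul, smul_eq_mul]
    have hinv : (↑u⁻¹ : S⟦X⟧) * u = 1 := u.inv_mul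
    linear_combination (-↑u⁻¹ * g * h) * hinv
  · have hinv₀ : constantCoeff (↑u⁻¹ : S⟦X⟧) = 1 := by
      have h₁ := congrArg constantCoeff (u.inv_mul : (↑u⁻¹ : S⟦X⟧) * u = 1)
      rwa [map_mul, hu₀, mul_one, map_one] at h₁
    rw [map_mul, hinv₀, one_mul, constantCoeff_C]

end PowerSeries

/-- Formal flow-box factorization: in `k[[w₁,…,w_{n-1}]][[t]]` with `D = ∂/∂t`,
if `D g = h · g` then `g = u · g₀` for a unit `u` with constant term `1`,
where `g₀ = g|_{t=0}`. -/
theorem formal_flow_box_factorization {K : Type*} [Field K] [CharZero K] (n : ℕ)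
    (g h : PowerSeries (MvPowerSeries (Fin (n - 1)) K))
    (hg : PowerSeries.derivative (MvPowerSeries (Fin (n - 1)) K) g = h * g) :
    ∃ u : (PowerSeries (MvPowerSeries (Fin (n - 1)) K))ˣ,
      (PowerSeries.constantCoeff (R := MvPowerSeries (Fin (n - 1)) K)) (↑u) = 1 ∧
      g = ↑u * (PowerSeries.C (R := MvPowerSeries (Fin (n - 1)) K))
            ((PowerSeries.constantCoeff (R := MvPowerSeries (Fin (n - 1)) K)) g) := by
  have := IsAddTorsionFree.of_module_rat (MvPowerSeries (Fin (n - 1)) K)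
  obtain ⟨u, hu₀, hu⟩ := PowerSeries.exists_unit_constantCoeff_eq_one_derivative_eq_mul h
  exact ⟨u, hu₀, PowerSeries.eq_mul_C_constantCoeff_of_derivative_eq_mul hu₀ hu hg⟩
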